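/- arXiv:2007.08765 — 2 statements merged into one kernel-verified Lean document; each statement's English description precedes it below -/
import Mathlib

section
/- For the Sel'kov isolated-cell system with efflux, a necessary condition for the existence of α > 0 with tr(J) = 0 (Hopf bifurcation boundary) is 0 < μ < χ^{3/2}/√ζ; equivalently, if μ ≥ χ^{3/2}/√ζ then for all α > 0 one has tr(J) < 0 fails to admit a zero crossing, i.e. the expression α = −μ²/χ² + (1/(2ζ))(−χ + √(χ² + 8ζμ²/χ)) is nonpositive. -/
open Real

/-!
With `t = ζ μ² / χ³` the radicand factors as `χ² (1 + 8 t)`, so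
`αHB = χ / (2 ζ) · (√(1 + 8 t) - (1 + 2 t))`. Hence `αHB > 0` iff `(1 + 2 t)² < 1 + 8 t`,
i.e. `4 t² < 4 t`, i.e. `t < 1`, which is `μ < χ^{3/2} / √ζ`.
-/

theorem one_add_two_mul_lt_sqrt_one_add_eight_mul_iff {t : ℝ} (ht : 0 < t) :
    1 + 2 * t < √(1 + 8 * t) ↔ t < 1 := by
  rw [Real.lt_sqrt (by positivity)]
  constructor <;> intro h <;> nlinarith

theorem hopf_value_eq_normalized {χ ζ : ℝ} (μ : ℝ) (hχ : 0 < χ) (hζ : ζ ≠ 0) :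
    -(μ ^ 2 / χ ^ 2) + (1 / (2 * ζ)) * (-χ + √(χ ^ 2 + 8 * ζ * μ ^ 2 / χ)) =
      χ / (2 * ζ) * (√(1 + 8 * (ζ * μ ^ 2 / χ ^ 3)) - (1 + 2 * (ζ * μ ^ 2 / χ ^ 3))) := by
  have hradicand : χ ^ 2 + 8 * ζ * μ ^ 2 / χ = χ ^ 2 * (1 + 8 * (ζ * μ ^ 2 / χ ^ 3)) := by
    field_simp
  rw [hradicand, Real.sqrt_mul (sq_nonneg χ), Real.sqrt_sq hχ.le]
  field_simp
  ring

theorem lt_sqrt_div_sqrt_iff {μ ζ c : ℝ} (hμ : 0 ≤ μ) (hζ : 0 < ζ) :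
    μ < √c / √ζ ↔ ζ * μ ^ 2 < c := by
  rw [← Real.sqrt_div' c hζ.le, Real.lt_sqrt hμ, lt_div_iff₀ hζ, mul_comm]

/-- The Hopf bifurcation boundary value αHB(μ) = −μ²/χ² + (1/(2ζ))(−χ + √(χ² + 8ζμ²/χ))
is positive if and only if 0 < μ < χ^{3/2}/√ζ; in particular if μ ≥ χ^{3/2}/√ζ then
αHB(μ) ≤ 0, so no positive α with tr(J) = 0 exists. -/
theorem selkov_hopf_mu_window
    (χ ζ μ : ℝ) (hχ : 0 < χ) (hζ : 0 < ζ) (hμ : 0 < μ)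
    (αHB : ℝ)
    (hα : αHB = -(μ ^ 2 / χ ^ 2) + (1 / (2 * ζ)) *
            (-χ + Real.sqrt (χ ^ 2 + 8 * ζ * μ ^ 2 / χ))) :
    (0 < αHB ↔ μ < Real.sqrt (χ ^ 3) / Real.sqrt ζ) ∧
    (Real.sqrt (χ ^ 3) / Real.sqrt ζ ≤ μ → αHB ≤ 0) := by
  have hpos : 0 < αHB ↔ ζ * μ ^ 2 < χ ^ 3 := by
    rw [hα, hopf_value_eq_normalized μ hχ hζ.ne', mul_pos_iff_of_pos_left (by positivity),
      sub_pos, one_add_two_mul_lt_sqrt_one_add_eight_mul_iff (by positivity),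
      div_lt_one (by positivity)]
  have hwindow : 0 < αHB ↔ μ < √(χ ^ 3) / √ζ :=
    hpos.trans (lt_sqrt_div_sqrt_iff hμ.le hζ).symm
  exact ⟨hwindow, fun h => not_lt.mp (mt hwindow.mp (not_lt.mpr h))⟩
end

section
/- With M as in the ring-and-center block structure (upper-left block 2πνG + M₀I with Ge = ωe, off-block entries 2πνg with g ≠ 0, corner entry 2πνR + M_m), the vector c = (e, γ)ᵀ with γ = −(ω + M₀/(2πν))/g is in the kernel of M if and only if ℋ(λ) := (ω + M₀/(2πν))(R + M_m/(2πν)) − (m−1)g² = 0. -/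
/-!
Write `a = 2πν` and `s = ω + M₀/a`. Because `Ge = ωe`, every ring row of `Mc` equals
`a s + a g γ`, which vanishes by the choice `γ = -s/g`; the centre row equals
`(m-1) a g + (a R + M_m) γ = -(a/g) ℋ(λ)`, and `a/g ≠ 0`.
-/

open Real Matrix

section BlockMulVec

variable {ι K : Type*} [Fintype ι] [CommSemiring K]

theorem fromBlocks_const_mulVec_sumElim_const (A : Matrix ι ι K) (b d x y : K) :
    (fromBlocks A (fun _ _ => b) (fun _ _ => b) (fun _ _ => d) :
        Matrix (ι ⊕ Unit) (ι ⊕ Unit) K) *ᵥ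
        Sum.elim (fun _ => x) (fun _ => y) =
      Sum.elim (A *ᵥ (fun _ => x) + fun _ => b * y) (fun _ => Fintype.card ι * b * x + d * y) := by
  ext (i | u) <;>
    simp [fromBlocks, mulVec, dotProduct, Fintype.sum_sum_type, Finset.sum_const, mul_assoc]

theorem smul_add_smul_one_mulVec_ones [DecidableEq ι] {G : Matrix ι ι K} {ω : K}
    (hGe : G *ᵥ (fun _ => 1) = ω • (fun _ => (1 : K))) (a M₀ : K) :
    (a • G + M₀ • (1 : Matrix ι ι K)) *ᵥ (fun _ => 1) = fun _ => a * ω + M₀ := by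
  ext
  simp [add_mulVec, smul_mulVec, hGe]

end BlockMulVec

section Scalar

variable {K : Type*} [Field K] {a g : K}

theorem mul_mul_neg_add_div_div (ha : a ≠ 0) (hg : g ≠ 0) (ω M₀ : K) :
    a * g * (-(ω + M₀ / a) / g) = -(a * ω + M₀) := by
  field_simp

theorem center_row_eq_zero_iff (ha : a ≠ 0) (hg : g ≠ 0) (n ω M₀ R Mm : K) :
    n * (a * g) + (a * R + Mm) * (-(ω + M₀ / a) / g) = 0 ↔
      (ω + M₀ / a) * (R + Mm / a) - n * g ^ 2 = 0 := by
  have key : n * (a * g) + (a * R + Mm) * (-(ω + M₀ / a) / g) =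
      -(a / g) * ((ω + M₀ / a) * (R + Mm / a) - n * g ^ 2) := by
    field_simp
    ring
  rw [key, mul_eq_zero, or_iff_right (neg_ne_zero.2 (div_ne_zero ha hg))]

end Scalar

theorem ring_center_inphase_kernel_iff_general
    (n : ℕ) (ν : ℝ) (hν : ν ≠ 0)
    (G : Matrix (Fin n) (Fin n) ℂ)
    (ω M₀ Mm g R : ℂ) (hg : g ≠ 0)
    (hGe : G.mulVec (fun _ => 1) = ω • (fun _ => (1 : ℂ)))
    (M : Matrix (Fin n ⊕ Unit) (Fin n ⊕ Unit) ℂ)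
    (hM : M = Matrix.fromBlocks
        (((2 * π * ν : ℝ) : ℂ) • G + M₀ • (1 : Matrix (Fin n) (Fin n) ℂ))
        (fun _ _ => ((2 * π * ν : ℝ) : ℂ) * g)
        (fun _ _ => ((2 * π * ν : ℝ) : ℂ) * g)
        (fun _ _ => ((2 * π * ν : ℝ) : ℂ) * R + Mm))
    (γ : ℂ) (hγ : γ = -(ω + M₀ / ((2 * π * ν : ℝ) : ℂ)) / g) :
    M.mulVec (Sum.elim (fun _ => 1) (fun _ => γ)) = 0 ↔
      (ω + M₀ / ((2 * π * ν : ℝ) : ℂ)) * (R + Mm / ((2 * π * ν : ℝ) : ℂ))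
        - (n : ℂ) * g ^ 2 = 0 := by
  have ha : ((2 * π * ν : ℝ) : ℂ) ≠ 0 := by
    exact_mod_cast mul_ne_zero (mul_ne_zero two_ne_zero pi_ne_zero) hν
  subst hM hγ
  rw [fromBlocks_const_mulVec_sumElim_const, smul_add_smul_one_mulVec_ones hGe]
  simp only [funext_iff, Sum.forall, Sum.elim_inl, Sum.elim_inr, Pi.add_apply, Pi.zero_apply,
    mul_mul_neg_add_div_div ha hg, add_neg_cancel, Fintype.card_fin, mul_one, implies_true,
    true_and, forall_const]
  exact center_row_eq_zero_iff ha hg _ _ _ _ _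

/-- In-phase mode of the ring-and-center GCEP matrix: with m = n+1 cells (n = m−1 ≥ 2),
the vector c = (e, γ)ᵀ with γ = −(ω + M₀/(2πν))/g lies in the kernel of M if and only
if ℋ(λ) = (ω + M₀/(2πν))(R + M_m/(2πν)) − (m−1)g² = 0. -/
theorem ring_center_inphase_kernel_iff
    (n : ℕ) (hn : 2 ≤ n) (ν : ℝ) (hν : ν ≠ 0)
    (G : Matrix (Fin n) (Fin n) ℂ) (hGsym : G.IsSymm)
    (ω M₀ Mm g R : ℂ) (hg : g ≠ 0)
    (hGe : G.mulVec (fun _ => 1) = ω • (fun _ => (1 : ℂ)))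
    (M : Matrix (Fin n ⊕ Unit) (Fin n ⊕ Unit) ℂ)
    (hM : M = Matrix.fromBlocks
        (((2 * π * ν : ℝ) : ℂ) • G + M₀ • (1 : Matrix (Fin n) (Fin n) ℂ))
        (fun _ _ => ((2 * π * ν : ℝ) : ℂ) * g)
        (fun _ _ => ((2 * π * ν : ℝ) : ℂ) * g)
        (fun _ _ => ((2 * π * ν : ℝ) : ℂ) * R + Mm))
    (γ : ℂ) (hγ : γ = -(ω + M₀ / ((2 * π * ν : ℝ) : ℂ)) / g) :
    M.mulVec (Sum.elim (fun _ => 1) (fun _ => γ)) = 0 ↔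
      (ω + M₀ / ((2 * π * ν : ℝ) : ℂ)) * (R + Mm / ((2 * π * ν : ℝ) : ℂ))
        - (n : ℂ) * g ^ 2 = 0 :=
  ring_center_inphase_kernel_iff_general n ν hν G ω M₀ Mm g R hg hGe M hM γ hγ
end
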